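/- arXiv:1007.4022 — 3 statements merged into one kernel-verified Lean document; each statement's English description precedes it below -/
import Mathlib

section
/- Let A and B be nonempty finite sets, and let F = F(A ⊔ B) be the free group with free basis A ⊔ B. If an element w ∈ F lies in the subgroup ⟨A⟩ generated by the basis elements from A, then the stabilizer Stab(w) of w in Aut(F) is not a cyclic group. -/
section Aux

variable {A B : Type} [DecidableEq B]

/-- inversion automorphism on generator `inr b` -/
def invHom (b : B) : FreeGroup (A ⊕ B) →* FreeGroup (A ⊕ B) :=
  FreeGroup.lift (Sum.elim (fun x => FreeGroup.of (Sum.inl x))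
    (fun y => if y = b then (FreeGroup.of (Sum.inr b))⁻¹ else FreeGroup.of (Sum.inr y)))

lemma invHom_invHom (b : B) : (invHom (A := A) b).comp (invHom b) = MonoidHom.id _ := by
  apply FreeGroup.ext_hom
  rintro (x | y) <;> simp [invHom]
  by_cases h : y = b <;> simp [h]

def mulHom (a : A) (b : B) : FreeGroup (A ⊕ B) →* FreeGroup (A ⊕ B) :=
  FreeGroup.lift (Sum.elim (fun x => FreeGroup.of (Sum.inl x))
    (fun y => if y = b then FreeGroup.of (Sum.inr b) * FreeGroup.of (Sum.inl a)
      else FreeGroup.of (Sum.inr y)))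

def mulHom' (a : A) (b : B) : FreeGroup (A ⊕ B) →* FreeGroup (A ⊕ B) :=
  FreeGroup.lift (Sum.elim (fun x => FreeGroup.of (Sum.inl x))
    (fun y => if y = b then FreeGroup.of (Sum.inr b) * (FreeGroup.of (Sum.inl a))⁻¹
      else FreeGroup.of (Sum.inr y)))

lemma mulHom_mulHom' (a : A) (b : B) :
    (mulHom a b).comp (mulHom' a b) = MonoidHom.id _ := by
  apply FreeGroup.ext_hom
  rintro (x | y) <;> simp [mulHom, mulHom']
  by_cases h : y = b <;> simp [h]

lemma mulHom'_mulHom (a : A) (b : B) :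
    (mulHom' a b).comp (mulHom a b) = MonoidHom.id _ := by
  apply FreeGroup.ext_hom
  rintro (x | y) <;> simp [mulHom, mulHom']
  by_cases h : y = b <;> simp [h]

omit [DecidableEq B] in
lemma fix_closure {f : FreeGroup (A ⊕ B) →* FreeGroup (A ⊕ B)}
    (hf : ∀ x : A, f (FreeGroup.of (Sum.inl x)) = FreeGroup.of (Sum.inl x))
    {w : FreeGroup (A ⊕ B)}
    (hw : w ∈ Subgroup.closure (Set.range fun a : A => FreeGroup.of (Sum.inl a))) :
    f w = w := by
  induction hw using Subgroup.closure_induction with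
  | mem x hx => obtain ⟨a, rfl⟩ := hx; exact hf a
  | one => simp
  | mul x y _ _ hx hy => simp [hx, hy]
  | inv x _ hx => simp [hx]

end Aux

/-- Let A and B be nonempty finite sets, and let F = F(A ⊔ B) be the free
group with free basis A ⊔ B. If an element w ∈ F lies in the subgroup ⟨A⟩ generated by the
basis elements from A, then the stabilizer of w in Aut(F) is not a cyclic group. -/
theorem statement0 {A B : Type} [Finite A] [Nonempty A] [Finite B] [Nonempty B]
    (w : FreeGroup (A ⊕ B))
    (hw : w ∈ Subgroup.closure (Set.range fun a : A => FreeGroup.of (Sum.inl a))) :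
    ¬ IsCyclic (MulAction.stabilizer (MulAut (FreeGroup (A ⊕ B))) w) := by
  letI := Classical.decEq B
  obtain ⟨a⟩ := ‹Nonempty A›
  obtain ⟨b⟩ := ‹Nonempty B›
  intro hcyc
  -- the two automorphisms
  set αE : MulAut (FreeGroup (A ⊕ B)) :=
    MonoidHom.toMulEquiv (invHom b) (invHom b) (invHom_invHom b) (invHom_invHom b) with hαE
  set βE : MulAut (FreeGroup (A ⊕ B)) :=
    MonoidHom.toMulEquiv (mulHom a b) (mulHom' a b) (mulHom'_mulHom a b) (mulHom_mulHom' a b)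
    with hβE
  have hαw : αE ∈ MulAction.stabilizer (MulAut (FreeGroup (A ⊕ B))) w := by
    show αE • w = w
    refine fix_closure (f := invHom b) (fun x => ?_) hw
    simp [invHom]
  have hβw : βE ∈ MulAction.stabilizer (MulAut (FreeGroup (A ⊕ B))) w := by
    show βE • w = w
    refine fix_closure (f := mulHom a b) (fun x => ?_) hw
    simp [mulHom]
  set s : MulAction.stabilizer (MulAut (FreeGroup (A ⊕ B))) w := ⟨αE, hαw⟩
  set t : MulAction.stabilizer (MulAut (FreeGroup (A ⊕ B))) w := ⟨βE, hβw⟩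
  obtain ⟨g, hg⟩ := hcyc
  obtain ⟨m, hm⟩ := hg s
  obtain ⟨n, hn⟩ := hg t
  have hcomm : s * t = t * s := by
    rw [← hm, ← hn, ← zpow_add, ← zpow_add, add_comm]
  have hco : αE * βE = βE * αE := Subtype.ext_iff.mp hcomm
  have hb := congrArg (fun e : MulAut (FreeGroup (A ⊕ B)) => e (FreeGroup.of (Sum.inr b))) hco
  simp only [MulAut.mul_apply, hαE, hβE] at hb
  -- evaluate
  have hb' : (FreeGroup.of (Sum.inr b : A ⊕ B))⁻¹ * FreeGroup.of (Sum.inl a)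
      = (FreeGroup.of (Sum.inr b : A ⊕ B) * FreeGroup.of (Sum.inl a))⁻¹ := by
    simpa [invHom, mulHom, MonoidHom.toMulEquiv] using hb
  -- distinguish by a homomorphism to ℤ
  have := congrArg (FreeGroup.lift (Sum.elim (fun _ : A => Multiplicative.ofAdd (1 : ℤ))
      (fun _ : B => (1 : Multiplicative ℤ)))) hb'
  simp at this
  have h2 := congrArg Multiplicative.toAdd this
  simp at h2
end

section
/- Let A and B be finite sets with #A ≥ 1 and #B ≥ 2, let F = F(A ⊔ B) be the free group with free basis A ⊔ B, and let b ∈ ⟨B⟩. If an element w ∈ F lies in the subgroup ⟨A ∪ {b}⟩ generated by the basis elements from A together with b, then the stabilizer Stab(w) of w in Aut(F) is not a cyclic group. -/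
/-!
If `Stab(w)` were cyclic, any two of its elements would satisfy a power relation `x ^ m = y ^ n`
with `n ≠ 0` as soon as `x ≠ 1`. But `Stab(w)` contains a nontrivial partial conjugation `θ_h`
(conjugate the `B`-generators by some `1 ≠ h ∈ ⟨B⟩` commuting with `b`, fix the `A`-generators),
which fixes `⟨A ∪ {b}⟩` pointwise, and an inner automorphism `ι_v` with `1 ≠ v` commuting with `w`.
A partial conjugation is inner only if it is trivial: the conjugating element centralizes two
basis elements of `B`, so it equals `h`, and a basis element of `A`, so it lies in `⟨a⟩ ∩ ⟨B⟩ = 1`.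
Hence `θ_h ^ m = ι_v ^ n` forces `v ^ n = 1`, contradicting torsion-freeness of `F`.
-/

open Subgroup

theorem IsCyclic.exists_zpow_eq_zpow {G : Type*} [Group G] [IsCyclic G] {x : G} (hx : x ≠ 1)
    (y : G) : ∃ m n : ℤ, n ≠ 0 ∧ x ^ m = y ^ n := by
  obtain ⟨g, hg⟩ := IsCyclic.exists_generator (α := G)
  obtain ⟨k, rfl⟩ := mem_zpowers_iff.1 (hg x)
  obtain ⟨l, rfl⟩ := mem_zpowers_iff.1 (hg y)
  refine ⟨l, k, fun hk => hx (by rw [hk, zpow_zero]), ?_⟩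
  rw [← zpow_mul, ← zpow_mul, mul_comm]

theorem exists_ne_one_commute {G : Type*} [Group G] [Nontrivial G] (z : G) :
    ∃ v : G, v ≠ 1 ∧ Commute v z := by
  by_cases hz : z = 1
  · obtain ⟨v, hv⟩ := exists_ne (1 : G)
    exact ⟨v, hv, hz ▸ Commute.one_right v⟩
  · exact ⟨z, hz, Commute.refl z⟩

theorem commute_inv_mul_of_conj_eq {G : Type*} [Group G] {u v y : G}
    (h : u * y * u⁻¹ = v * y * v⁻¹) : Commute (v⁻¹ * u) y := by
  rw [Commute, SemiconjBy, ← mul_inv_eq_iff_eq_mul]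
  calc v⁻¹ * u * y * (v⁻¹ * u)⁻¹ = v⁻¹ * (u * y * u⁻¹) * v := by group
    _ = y := by rw [h]; group

open scoped IsMulCommutative in
theorem IsFreeGroup.isCyclic_of_isMulCommutative {G : Type*} [Group G] [IsFreeGroup G]
    [IsMulCommutative G] : IsCyclic G := by
  classical
  have : Subsingleton (IsFreeGroup.Generators G) := by
    refine ⟨fun s t => by_contra fun hst => ?_⟩
    -- two distinct free generators would map onto non-commuting permutations
    let f : IsFreeGroup.Generators G → Equiv.Perm (Fin 3) :=
      fun u => if u = s then Equiv.swap 0 1 else Equiv.swap 0 2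
    have := congrArg (IsFreeGroup.lift f) (mul_comm (IsFreeGroup.of s) (IsFreeGroup.of t))
    simp only [map_mul, IsFreeGroup.lift_of, f, if_neg (Ne.symm hst)] at this
    exact absurd this (by decide)
  have : IsCyclic (FreeGroup (IsFreeGroup.Generators G)) := by
    rcases isEmpty_or_nonempty (IsFreeGroup.Generators G) with _ | ⟨⟨s⟩⟩
    · exact isCyclic_of_subsingleton
    · have := uniqueOfSubsingleton s
      infer_instance
  exact isCyclic_of_surjective (IsFreeGroup.mulEquiv G) (MulEquiv.surjective _)

namespace FreeGroup

variable {α : Type*}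

section ExpSum

variable [DecidableEq α]

def expSum (s : α) : FreeGroup α →* Multiplicative ℤ :=
  FreeGroup.lift (Pi.mulSingle s (Multiplicative.ofAdd 1))

@[simp] theorem expSum_of_self (s : α) : expSum s (of s) = Multiplicative.ofAdd 1 := by
  simp [expSum]

@[simp] theorem expSum_of_of_ne {s t : α} (h : t ≠ s) : expSum s (of t) = 1 := by
  simp [expSum, h]

theorem expSum_of_zpow (s : α) (n : ℤ) : expSum s (of s ^ n) = Multiplicative.ofAdd n := by
  simp [← ofAdd_zsmul]

end ExpSum

theorem mem_zpowers_of_commute_of {x : FreeGroup α} {s : α} (h : Commute x (of s)) :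
    x ∈ zpowers (of s) := by
  classical
  -- `closure {x, of s}` is abelian, and free by Nielsen–Schreier, hence cyclic
  have : IsMulCommutative (closure {x, of s}) := isMulCommutative_closure <| by
    rintro u (rfl | rfl) v (rfl | rfl) <;> first | rfl | exact h | exact h.symm
  obtain ⟨z, hz⟩ :=
    IsFreeGroup.isCyclic_of_isMulCommutative.exists_generator (α := closure {x, of s})
  obtain ⟨p, hp⟩ := mem_zpowers_iff.1 (hz ⟨x, subset_closure (by simp)⟩)
  obtain ⟨q, hq⟩ := mem_zpowers_iff.1 (hz ⟨of s, subset_closure (by simp)⟩)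
  replace hp : (z : FreeGroup α) ^ p = x := congrArg Subtype.val hp
  replace hq : (z : FreeGroup α) ^ q = of s := congrArg Subtype.val hq
  have hq1 : q * q = 1 := by
    have := congrArg (Multiplicative.toAdd ∘ expSum s) hq
    simp only [Function.comp_apply, map_zpow, toAdd_zpow, expSum_of_self, toAdd_ofAdd] at this
    rcases Int.eq_one_or_neg_one_of_mul_eq_one' this with ⟨rfl, -⟩ | ⟨rfl, -⟩ <;> rfl
  have hzs : (z : FreeGroup α) = of s ^ q := by
    rw [← zpow_one (z : FreeGroup α), ← hq1, zpow_mul, hq]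
  rw [← hp, hzs, ← zpow_mul]
  exact zpow_mem_zpowers _ _

theorem eq_one_of_commute_of_of_expSum_eq_one [DecidableEq α] {x : FreeGroup α} {s : α}
    (hc : Commute x (of s)) (he : expSum s x = 1) : x = 1 := by
  obtain ⟨p, rfl⟩ := mem_zpowers_iff.1 (mem_zpowers_of_commute_of hc)
  rw [expSum_of_zpow] at he
  rw [ofAdd_eq_one.1 he, zpow_zero]

theorem eq_one_of_commute_of_of {x : FreeGroup α} {s t : α} (hst : s ≠ t)
    (hs : Commute x (of s)) (ht : Commute x (of t)) : x = 1 := by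
  classical
  refine eq_one_of_commute_of_of_expSum_eq_one hs ?_
  obtain ⟨q, rfl⟩ := mem_zpowers_iff.1 (mem_zpowers_of_commute_of ht)
  rw [map_zpow, expSum_of_of_ne hst.symm, one_zpow]

variable {A B : Type*}

abbrev closureInr (A B : Type*) : Subgroup (FreeGroup (A ⊕ B)) :=
  closure (Set.range fun y : B => of (Sum.inr y))

instance [Nonempty B] : Nontrivial (closureInr A B) := by
  obtain ⟨y⟩ := ‹Nonempty B›
  exact nontrivial_of_ne ⟨of (Sum.inr y), subset_closure ⟨y, rfl⟩⟩ 1 (by simp [Subtype.ext_iff])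

def partialConjHom (g : FreeGroup (A ⊕ B)) : FreeGroup (A ⊕ B) →* FreeGroup (A ⊕ B) :=
  FreeGroup.lift (Sum.elim (fun a => of (Sum.inl a)) fun y => g * of (Sum.inr y) * g⁻¹)

@[simp] theorem partialConjHom_of_inl (g : FreeGroup (A ⊕ B)) (a : A) :
    partialConjHom g (of (Sum.inl a)) = of (Sum.inl a) := by
  simp [partialConjHom]

theorem partialConjHom_apply_of_mem (g : FreeGroup (A ⊕ B)) {x : FreeGroup (A ⊕ B)}
    (hx : x ∈ closureInr A B) : partialConjHom g x = g * x * g⁻¹ := by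
  refine MonoidHom.eqOn_closure (g := (MulAut.conj g).toMonoidHom) ?_ hx
  rintro _ ⟨y, rfl⟩
  simp [partialConjHom]

@[simp] theorem partialConjHom_one : partialConjHom (1 : FreeGroup (A ⊕ B)) = MonoidHom.id _ :=
  FreeGroup.ext_hom _ _ <| by rintro (a | y) <;> simp [partialConjHom]

theorem partialConjHom_mul (g : FreeGroup (A ⊕ B)) {h : FreeGroup (A ⊕ B)}
    (hh : h ∈ closureInr A B) :
    partialConjHom (g * h) = (partialConjHom g).comp (partialConjHom h) := by
  refine FreeGroup.ext_hom _ _ fun s => ?_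
  rcases s with a | y
  · simp
  · have hy : of (Sum.inr y) ∈ closureInr A B := subset_closure ⟨y, rfl⟩
    simp only [MonoidHom.comp_apply, partialConjHom_apply_of_mem _ hy,
      partialConjHom_apply_of_mem _ (mul_mem (mul_mem hh hy) (inv_mem hh))]
    group

def partialConj : closureInr A B →* MulAut (FreeGroup (A ⊕ B)) where
  toFun g := (partialConjHom g).toMulEquiv (partialConjHom (g⁻¹ : closureInr A B))
    (by rw [← partialConjHom_mul _ g.2, ← coe_mul, inv_mul_cancel, coe_one, partialConjHom_one])
    (by rw [← partialConjHom_mul _ (g⁻¹).2, ← coe_mul, mul_inv_cancel, coe_one,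
      partialConjHom_one])
  map_one' := MulEquiv.ext fun x => by simp
  map_mul' g h := MulEquiv.ext fun x => by simp [partialConjHom_mul _ h.2]

theorem partialConj_apply (g : closureInr A B) (x : FreeGroup (A ⊕ B)) :
    partialConj g x = partialConjHom g x := rfl

theorem partialConj_apply_eq_self {h : closureInr A B} {c x : FreeGroup (A ⊕ B)}
    (hc : c ∈ closureInr A B) (hhc : Commute (h : FreeGroup (A ⊕ B)) c)
    (hx : x ∈ closure ((Set.range fun a : A => of (Sum.inl a)) ∪ {c})) :
    partialConj h x = x := by
  refine MonoidHom.eqOn_closure (f := (partialConj h).toMonoidHom) (g := MonoidHom.id _) ?_ hx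
  rintro _ (⟨a, rfl⟩ | rfl)
  · simp [partialConj_apply]
  · simp [partialConj_apply, partialConjHom_apply_of_mem _ hc, hhc.eq]

theorem partialConj_eq_conj_iff [Nonempty A] [Nontrivial B] {h : closureInr A B}
    {v : FreeGroup (A ⊕ B)} : partialConj h = MulAut.conj v ↔ h = 1 ∧ v = 1 := by
  classical
  refine ⟨fun he => ?_, by rintro ⟨rfl, rfl⟩; simp⟩
  obtain ⟨a⟩ := ‹Nonempty A›
  obtain ⟨y₁, y₂, hy⟩ := exists_pair_ne B
  have hconj (x : FreeGroup (A ⊕ B)) : partialConj h x = v * x * v⁻¹ := by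
    rw [he, MulAut.conj_apply]
  have hcomm (y : B) : Commute (v⁻¹ * h) (of (Sum.inr y)) := by
    refine commute_inv_mul_of_conj_eq ?_
    rw [← hconj, partialConj_apply, partialConjHom_apply_of_mem _ (subset_closure ⟨y, rfl⟩)]
  have hhv : (h : FreeGroup (A ⊕ B)) = v :=
    (inv_mul_eq_one.1 (eq_one_of_commute_of_of (Sum.inr_injective.ne hy) (hcomm y₁)
      (hcomm y₂))).symm
  have hva : Commute v (of (Sum.inl a)) := by
    simpa using commute_inv_mul_of_conj_eq (u := v) (v := 1) (by
      rw [← hconj, partialConj_apply, partialConjHom_of_inl]; group)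
  have hva' : expSum (Sum.inl a) v = 1 := by
    refine closure_le (K := (expSum (Sum.inl a)).ker) |>.2 ?_ (hhv ▸ h.2)
    rintro _ ⟨y, rfl⟩
    simp
  have hv : v = 1 := eq_one_of_commute_of_of_expSum_eq_one hva hva'
  exact ⟨Subtype.ext (hhv.trans hv), hv⟩

end FreeGroup

open FreeGroup

theorem statement1_general {A B : Type}
    (hA : 1 ≤ Nat.card A) (hB : 2 ≤ Nat.card B)
    (b : FreeGroup (A ⊕ B))
    (hb : b ∈ Subgroup.closure (Set.range fun y : B => FreeGroup.of (Sum.inr y)))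
    (w : FreeGroup (A ⊕ B))
    (hw : w ∈ Subgroup.closure
      ((Set.range fun a : A => FreeGroup.of (Sum.inl a)) ∪ {b})) :
    ¬ IsCyclic (MulAction.stabilizer (MulAut (FreeGroup (A ⊕ B))) w) := by
  have : Nonempty A := (Nat.card_pos_iff.1 hA).1
  have : Finite B := Nat.finite_of_card_ne_zero (by omega)
  have : Nontrivial B := Finite.one_lt_card_iff_nontrivial.1 hB
  intro hcyc
  obtain ⟨h, hh1, hhb⟩ := exists_ne_one_commute (⟨b, hb⟩ : closureInr A B)
  obtain ⟨v, hv1, hvw⟩ := exists_ne_one_commute w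
  let θ : MulAction.stabilizer (MulAut (FreeGroup (A ⊕ B))) w :=
    ⟨partialConj h, partialConj_apply_eq_self hb (congrArg Subtype.val hhb.eq) hw⟩
  let ι : MulAction.stabilizer (MulAut (FreeGroup (A ⊕ B))) w :=
    ⟨MulAut.conj v, by simp [MulAction.mem_stabilizer_iff, hvw.eq]⟩
  have hθ : θ ≠ 1 := fun hθ1 => hh1 <| (partialConj_eq_conj_iff (v := 1)).1
    (by simpa [θ, Subtype.ext_iff] using hθ1) |>.1
  obtain ⟨m, n, hn, hθι⟩ := IsCyclic.exists_zpow_eq_zpow hθ ι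
  have hvn : v ^ n = 1 := (partialConj_eq_conj_iff (h := h ^ m)).1
    (by simpa [θ, ι, Subtype.ext_iff] using hθι) |>.2
  exact hn ((IsMulTorsionFree.zpow_eq_one_iff_right hv1).1 hvn)

/-- Let A and B be finite sets with #A ≥ 1 and #B ≥ 2, let F = F(A ⊔ B) be
the free group with free basis A ⊔ B, and let b ∈ ⟨B⟩. If an element w ∈ F lies in the
subgroup ⟨A ∪ {b}⟩, then the stabilizer of w in Aut(F) is not a cyclic group. -/
theorem statement1 {A B : Type} [Finite A] [Finite B]
    (hA : 1 ≤ Nat.card A) (hB : 2 ≤ Nat.card B)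
    (b : FreeGroup (A ⊕ B))
    (hb : b ∈ Subgroup.closure (Set.range fun y : B => FreeGroup.of (Sum.inr y)))
    (w : FreeGroup (A ⊕ B))
    (hw : w ∈ Subgroup.closure
      ((Set.range fun a : A => FreeGroup.of (Sum.inl a)) ∪ {b})) :
    ¬ IsCyclic (MulAction.stabilizer (MulAut (FreeGroup (A ⊕ B))) w) :=
  statement1_general hA hB b hb w hw
end

section
/- Let X be a finite set with #X ≥ 2 and let C denote the set of cyclically reduced elements of F(X). If S ⊆ C is exponentially C-generic, then the set S' := {w ∈ F(X) : the cyclic reduction of w lies in S} is exponentially F(X)-generic. -/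
/-! Common definitions: cyclic length, Whitehead automorphisms, the sets TS, TS', L(ε),
balls, and exponential genericity in the free group F(X). -/

/-- The cyclic length ‖w‖_X : the minimum of |g w g⁻¹|_X over g ∈ F(X). -/
noncomputable def cyclicLength {X : Type} [DecidableEq X] (w : FreeGroup X) : ℕ :=
  sInf (Set.range fun g : FreeGroup X => FreeGroup.norm (g * w * g⁻¹))

/-- w is cyclically reduced if |w|_X = ‖w‖_X. -/
def CyclicallyReduced {X : Type} [DecidableEq X] (w : FreeGroup X) : Prop :=
  FreeGroup.norm w = cyclicLength w

/-- The set X^± = X ∪ X⁻¹ of letters, viewed inside F(X). -/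
def Xpm (X : Type) : Set (FreeGroup X) :=
  (Set.range fun x : X => FreeGroup.of x) ∪ (Set.range fun x : X => (FreeGroup.of x)⁻¹)

/-- σ is a type I (relabeling) Whitehead automorphism: there is a bijection π of X^±
commuting with inversion such that σ(x) = π(x) for all x ∈ X. -/
def IsTypeI {X : Type} (σ : MulAut (FreeGroup X)) : Prop :=
  ∃ π : FreeGroup X → FreeGroup X,
    Set.BijOn π (Xpm X) (Xpm X) ∧
    (∀ x ∈ Xpm X, π x⁻¹ = (π x)⁻¹) ∧
    (∀ x : X, σ (FreeGroup.of x) = π (FreeGroup.of x))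

/-- σ is a type II Whitehead automorphism: there is a ∈ X^± with σ(a) = a and
σ(x) ∈ {x, xa, a⁻¹x, a⁻¹xa} for every x ∈ X^±. -/
def IsTypeII {X : Type} (σ : MulAut (FreeGroup X)) : Prop :=
  ∃ a ∈ Xpm X, σ a = a ∧
    ∀ x ∈ Xpm X, σ x = x ∨ σ x = x * a ∨ σ x = a⁻¹ * x ∨ σ x = a⁻¹ * x * a

/-- σ is inner if it is conjugation by some element of F(X). -/
def IsInnerAut {X : Type} (σ : MulAut (FreeGroup X)) : Prop :=
  ∃ g : FreeGroup X, σ = MulAut.conj g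

/-- w is a proper power if w = z^r for some z and some integer r ≥ 2. -/
def IsProperPower {X : Type} (w : FreeGroup X) : Prop :=
  ∃ z : FreeGroup X, ∃ r : ℕ, 2 ≤ r ∧ w = z ^ r

/-- TS is the set of cyclically reduced w that are not proper powers, whose cyclic length
is strictly increased by every non-inner type II Whitehead automorphism, and whose
conjugacy class is fixed by no non-identity type I Whitehead automorphism. -/
def TS (X : Type) [DecidableEq X] : Set (FreeGroup X) :=
  {w | CyclicallyReduced w ∧ ¬ IsProperPower w ∧
    (∀ τ : MulAut (FreeGroup X), IsTypeII τ → ¬ IsInnerAut τ →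
      cyclicLength w < cyclicLength (τ w)) ∧
    (∀ σ : MulAut (FreeGroup X), IsTypeI σ → σ ≠ 1 → ¬ IsConj w (σ w))}

/-- The set of elements of F(X) whose cyclic reduction lies in S. -/
def cyclicPreimage {X : Type} [DecidableEq X] (S : Set (FreeGroup X)) : Set (FreeGroup X) :=
  {w | ∃ g u : FreeGroup X, u ∈ S ∧ CyclicallyReduced u ∧ w = g * u * g⁻¹ ∧
    FreeGroup.norm w = 2 * FreeGroup.norm g + FreeGroup.norm u}

/-- TS' is the set of elements of F(X) whose cyclic reduction lies in TS. -/
def TS' (X : Type) [DecidableEq X] : Set (FreeGroup X) :=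
  cyclicPreimage (TS X)

/-- The ball B_n = {w ∈ F(X) : |w|_X ≤ n}. -/
def ballF (X : Type) [DecidableEq X] (n : ℕ) : Set (FreeGroup X) :=
  {w | FreeGroup.norm w ≤ n}

/-- S is exponentially T-generic: there are C > 0 and s ∈ (0,1) with
#((T∖S) ∩ B_n) ≤ C·s^n·#(T ∩ B_n) for all n. -/
def ExpGeneric {X : Type} [DecidableEq X] (S T : Set (FreeGroup X)) : Prop :=
  ∃ C : ℝ, 0 < C ∧ ∃ s : ℝ, 0 < s ∧ s < 1 ∧
    ∀ n : ℕ, (((T \ S) ∩ ballF X n).ncard : ℝ) ≤ C * s ^ n * ((T ∩ ballF X n).ncard : ℝ)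

/-- L(ε): the set of cyclically reduced w of length n ≥ 1 all of whose one-letter
frequencies lie in (1/(2N) − ε, 1/(2N) + ε) and all of whose cyclic two-letter
frequencies (for y ≠ x⁻¹) lie in (1/(2N(2N−1)) − ε, 1/(2N(2N−1)) + ε). -/
def Lset (X : Type) [Fintype X] [DecidableEq X] (ε : ℝ) : Set (FreeGroup X) :=
  {w | CyclicallyReduced w ∧ 1 ≤ FreeGroup.norm w ∧
    ∀ x y : X × Bool, y ≠ (x.1, !x.2) →
      |((w.toWord.count x : ℝ) / (FreeGroup.norm w : ℝ)) -
        1 / (2 * (Fintype.card X : ℝ))| < ε ∧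
      |(((w.toWord.zip (w.toWord.rotate 1)).count (x, y) : ℝ) / (FreeGroup.norm w : ℝ)) -
        1 / (2 * (Fintype.card X : ℝ) * (2 * (Fintype.card X : ℝ) - 1))| < ε}

/-!
Write `w = g u g⁻¹` with `u` the cyclic reduction of `w` and `|w| = 2|g| + |u|`. The reduced word
of `u` is cyclically reduced, so `|uⁿ| = n |u|`, which forces `|u| ≤ |h u h⁻¹|` for every `h`: `u`
is cyclically reduced in the sense of cyclic length. Hence `w ↦ (g, u)` injects the elements of
`B_n` outside `S'` into pairs with `|g| = k` and `u ∈ (C ∖ S) ∩ B_{n-2k}`. With `M = 2#X - 1`,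
the sphere of radius `k` has at most `2 Mᵏ` elements and `Mⁿ ≤ #B_n ≤ 3 Mⁿ`, so this number is at
most `Σₖ 2 Mᵏ · 3 C₀ (M s)ⁿ⁻²ᵏ = 6 C₀ (M s)ⁿ Σₖ (M s²)⁻ᵏ`. For `s ≥ 2/3` the ratio `(M s²)⁻¹` is at
most `3/4`, giving the bound `24 C₀ sⁿ Mⁿ ≤ 24 C₀ sⁿ #B_n`.
-/

namespace FreeGroup

variable {α : Type*}

section CyclicReduction

variable [DecidableEq α]

theorem IsReduced.toWord_mk {L : List (α × Bool)} (h : IsReduced L) : (mk L).toWord = L := by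
  rw [FreeGroup.toWord_mk, h.reduce_eq]

theorem IsReduced.norm_mk {L : List (α × Bool)} (h : IsReduced L) : norm (mk L) = L.length := by
  rw [norm, h.toWord_mk]

theorem norm_pow_le (x : FreeGroup α) : ∀ n : ℕ, norm (x ^ n) ≤ n * norm x
  | 0 => by simp
  | n + 1 => by
    rw [pow_succ, add_mul, one_mul]
    exact (norm_mul_le _ _).trans (Nat.add_le_add_right (norm_pow_le x n) _)

theorem norm_pow_of_isCyclicallyReduced {x : FreeGroup α} (h : IsCyclicallyReduced x.toWord)
    (n : ℕ) : norm (x ^ n) = n * norm x := by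
  rw [norm, toWord_pow, (h.flatten_replicate n).isReduced.reduce_eq, List.length_flatten]
  simp [norm]

/-- Powers make the conjugator negligible: `n |x| = |xⁿ| ≤ 2 |g| + n |g x g⁻¹|`. -/
theorem norm_le_norm_conj_of_isCyclicallyReduced {x : FreeGroup α}
    (h : IsCyclicallyReduced x.toWord) (g : FreeGroup α) : norm x ≤ norm (g * x * g⁻¹) := by
  set n := 2 * norm g + 1
  have hpow : x ^ n = g⁻¹ * (g * x * g⁻¹) ^ n * g := by rw [conj_pow]; group
  have hle : n * norm x ≤ 2 * norm g + n * norm (g * x * g⁻¹) := by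
    calc n * norm x = norm (g⁻¹ * (g * x * g⁻¹) ^ n * g) := by
          rw [← hpow, norm_pow_of_isCyclicallyReduced h]
      _ ≤ norm g⁻¹ + norm ((g * x * g⁻¹) ^ n) + norm g :=
          (norm_mul_le _ _).trans (Nat.add_le_add_right (norm_mul_le _ _) _)
      _ ≤ 2 * norm g + n * norm (g * x * g⁻¹) := by
          have := norm_pow_le (g * x * g⁻¹) n
          rw [norm_inv_eq]
          omega
  by_contra! hlt
  have := Nat.mul_le_mul_left n hlt
  rw [Nat.mul_succ] at this
  omega

theorem cyclicallyReduced_of_isCyclicallyReduced {X : Type} [DecidableEq X] {u : FreeGroup X}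
    (h : IsCyclicallyReduced u.toWord) : CyclicallyReduced u := by
  refine le_antisymm (le_csInf ⟨_, 1, rfl⟩ ?_) (Nat.sInf_le ⟨1, by simp⟩)
  rintro _ ⟨g, rfl⟩
  exact norm_le_norm_conj_of_isCyclicallyReduced h g

def cyclicReduction (w : FreeGroup α) : FreeGroup α := mk (reduceCyclically w.toWord)

def cyclicConjugator (w : FreeGroup α) : FreeGroup α := mk (reduceCyclically.conjugator w.toWord)

theorem cyclicConjugator_mul_cyclicReduction_mul_inv (w : FreeGroup α) :
    cyclicConjugator w * cyclicReduction w * (cyclicConjugator w)⁻¹ = w := by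
  rw [cyclicConjugator, cyclicReduction, inv_mk, mul_mk, mul_mk,
    reduceCyclically.conj_conjugator_reduceCyclically, mk_toWord]

theorem isCyclicallyReduced_toWord_cyclicReduction (w : FreeGroup α) :
    IsCyclicallyReduced (cyclicReduction w).toWord := by
  have h := reduceCyclically.isCyclicallyReduced (isReduced_toWord (x := w))
  rwa [cyclicReduction, h.isReduced.toWord_mk]

theorem norm_eq_two_mul_norm_cyclicConjugator_add (w : FreeGroup α) :
    norm w = 2 * norm (cyclicConjugator w) + norm (cyclicReduction w) := by
  have hw := reduceCyclically.conj_conjugator_reduceCyclically w.toWord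
  have hred : IsReduced (reduceCyclically.conjugator w.toWord) :=
    isReduced_toWord.infix ⟨[], _, by rw [List.nil_append, ← List.append_assoc, hw]⟩
  rw [cyclicConjugator, cyclicReduction, hred.norm_mk,
    (reduceCyclically.isCyclicallyReduced isReduced_toWord).isReduced.norm_mk, norm]
  conv_lhs => rw [← hw]
  simp only [List.length_append, invRev_length]
  ring

theorem cyclicallyReduced_cyclicReduction {X : Type} [DecidableEq X] (w : FreeGroup X) :
    CyclicallyReduced (cyclicReduction w) :=
  cyclicallyReduced_of_isCyclicallyReduced (isCyclicallyReduced_toWord_cyclicReduction w)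

theorem mem_cyclicPreimage_of_cyclicReduction_mem {X : Type} [DecidableEq X]
    {S : Set (FreeGroup X)} {w : FreeGroup X} (h : cyclicReduction w ∈ S) :
    w ∈ cyclicPreimage S :=
  ⟨_, _, h, cyclicallyReduced_cyclicReduction w,
    (cyclicConjugator_mul_cyclicReduction_mul_inv w).symm,
    norm_eq_two_mul_norm_cyclicConjugator_add w⟩

end CyclicReduction

theorem fst_eq_imp_snd_eq_iff_ne (p a : α × Bool) :
    (p.1 = a.1 → p.2 = a.2) ↔ a ≠ (p.1, !p.2) := by
  obtain ⟨x, b⟩ := p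
  obtain ⟨y, c⟩ := a
  cases b <;> cases c <;> simp [eq_comm]

def reducedAfter (p : α × Bool) (k : ℕ) : Set (List (α × Bool)) :=
  {l | IsReduced (p :: l) ∧ l.length = k}

theorem isReduced_of_mem_reducedAfter {p : α × Bool} {k : ℕ} {l : List (α × Bool)}
    (hl : l ∈ reducedAfter p k) : IsReduced l :=
  hl.1.of_cons

theorem reducedAfter_finite [Finite α] (p : α × Bool) (k : ℕ) : (reducedAfter p k).Finite :=
  (List.finite_length_eq _ k).subset fun _ hl => hl.2

def consReducedAfter (p : α × Bool) (k : ℕ) :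
    (Σ a : {a : α × Bool // a ≠ (p.1, !p.2)}, reducedAfter a.1 k) → reducedAfter p (k + 1) :=
  fun x => ⟨x.1.1 :: x.2.1,
    isReduced_cons_cons.2 ⟨(fst_eq_imp_snd_eq_iff_ne _ _).2 x.1.2, x.2.2.1⟩,
    by simp [x.2.2.2]⟩

theorem consReducedAfter_bijective (p : α × Bool) (k : ℕ) :
    Function.Bijective (consReducedAfter p k) := by
  constructor
  · rintro ⟨⟨a, ha⟩, ⟨t, ht⟩⟩ ⟨⟨b, hb⟩, ⟨u, hu⟩⟩ h
    simp only [consReducedAfter] at h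
    obtain ⟨rfl, rfl⟩ := h
    rfl
  · rintro ⟨_ | ⟨a, t⟩, hred, hlen⟩
    · simp at hlen
    · rw [isReduced_cons_cons, fst_eq_imp_snd_eq_iff_ne] at hred
      exact ⟨⟨⟨a, hred.1⟩, ⟨t, hred.2, by simpa using hlen⟩⟩, rfl⟩

theorem ncard_reducedAfter [Fintype α] (p : α × Bool) (k : ℕ) :
    (reducedAfter p k).ncard = (2 * Fintype.card α - 1) ^ k := by
  induction k generalizing p with
  | zero =>
    rw [pow_zero, Set.ncard_eq_one]
    exact ⟨[], Set.ext fun l => ⟨fun hl => List.length_eq_zero_iff.1 hl.2,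
      by rintro rfl; exact ⟨IsReduced.singleton, rfl⟩⟩⟩
  | succ k ih =>
    classical
    have : ∀ a : {a : α × Bool // a ≠ (p.1, !p.2)}, Finite (reducedAfter a.1 k) :=
      fun a => (reducedAfter_finite _ k).to_subtype
    rw [← Nat.card_coe_set_eq, ← Nat.card_eq_of_bijective _ (consReducedAfter_bijective p k),
      Nat.card_sigma]
    simp only [Nat.card_coe_set_eq, ih, Finset.sum_const, Finset.card_univ, smul_eq_mul,
      pow_succ']
    congr 1
    simp [Fintype.card_prod, mul_comm]

variable [DecidableEq α]

def sphere (k : ℕ) : Set (FreeGroup α) := {w | norm w = k}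

theorem sphere_finite [Finite α] (k : ℕ) : (sphere (α := α) k).Finite :=
  ((List.finite_length_eq _ k).preimage toWord_injective.injOn).subset fun _ hw => hw

variable [Fintype α]

theorem pow_le_ncard_sphere [Nonempty α] (k : ℕ) :
    (2 * Fintype.card α - 1) ^ k ≤ (sphere (α := α) k).ncard := by
  obtain ⟨x⟩ := ‹Nonempty α›
  have hinj : Set.InjOn mk (reducedAfter (x, true) k) := fun l hl l' hl' h => by
    rw [← (isReduced_of_mem_reducedAfter hl).toWord_mk, h,
      (isReduced_of_mem_reducedAfter hl').toWord_mk]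
  rw [← ncard_reducedAfter (x, true), ← hinj.ncard_image]
  refine Set.ncard_le_ncard ?_ (sphere_finite k)
  rintro _ ⟨l, hl, rfl⟩
  exact ((isReduced_of_mem_reducedAfter hl).norm_mk).trans hl.2

/-- A reduced word can follow `(x, true)` or `(x, false)`, as it cannot start with both of their
inverses. -/
theorem ncard_sphere_le [Nonempty α] (k : ℕ) :
    (sphere (α := α) k).ncard ≤ 2 * (2 * Fintype.card α - 1) ^ k := by
  obtain ⟨x⟩ := ‹Nonempty α›
  have hsub : toWord '' sphere k ⊆ reducedAfter (x, true) k ∪ reducedAfter (x, false) k := by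
    rintro _ ⟨w, hw, rfl⟩
    have hlen : w.toWord.length = k := hw
    rcases hl : w.toWord with _ | ⟨a, t⟩
    · exact Or.inl ⟨IsReduced.singleton, hl ▸ hlen⟩
    · have hred : IsReduced (a :: t) := hl ▸ isReduced_toWord
      rw [hl] at hlen
      obtain ⟨y, b⟩ := a
      cases b
      · exact Or.inr ⟨isReduced_cons_cons.2 ⟨fun _ => rfl, hred⟩, hlen⟩
      · exact Or.inl ⟨isReduced_cons_cons.2 ⟨fun _ => rfl, hred⟩, hlen⟩
  calc (sphere (α := α) k).ncard = (toWord '' sphere k).ncard :=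
        (toWord_injective.injOn.ncard_image).symm
    _ ≤ (reducedAfter (x, true) k ∪ reducedAfter (x, false) k).ncard :=
        Set.ncard_le_ncard hsub ((reducedAfter_finite _ k).union (reducedAfter_finite _ k))
    _ ≤ (reducedAfter (x, true) k).ncard + (reducedAfter (x, false) k).ncard :=
        Set.ncard_union_le _ _
    _ = 2 * (2 * Fintype.card α - 1) ^ k := by
        rw [ncard_reducedAfter, ncard_reducedAfter, ← two_mul]

end FreeGroup

open FreeGroup

theorem sum_range_two_mul_pow_le {M : ℕ} (hM : 3 ≤ M) :
    ∀ n : ℕ, ∑ k ∈ Finset.range (n + 1), 2 * M ^ k ≤ 3 * M ^ n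
  | 0 => by simp
  | n + 1 => by
    rw [Finset.sum_range_succ, pow_succ]
    have := sum_range_two_mul_pow_le hM n
    nlinarith [Nat.mul_le_mul_left (M ^ n) hM]

/-- Each term equals `(M s)ⁿ r^k` with `r = (M s²)⁻¹ ≤ 3/4`. -/
theorem sum_pow_mul_pow_sub_two_mul_le {M s : ℝ} (hM : 3 ≤ M) (hs : 2 / 3 ≤ s) (n : ℕ) :
    ∑ k ∈ Finset.range (n / 2 + 1), M ^ k * (M * s) ^ (n - 2 * k) ≤ 4 * (M * s) ^ n := by
  set r := (M * s ^ 2)⁻¹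
  have hMs : 4 / 3 ≤ M * s ^ 2 := by nlinarith
  have hr0 : 0 ≤ r := by positivity
  have hr : r ≤ 3 / 4 := by
    rw [show (3 / 4 : ℝ) = (4 / 3)⁻¹ by norm_num]
    exact inv_anti₀ (by norm_num) hMs
  have hterm : ∀ k ∈ Finset.range (n / 2 + 1),
      M ^ k * (M * s) ^ (n - 2 * k) = (M * s) ^ n * r ^ k := by
    intro k hk
    rw [Finset.mem_range] at hk
    obtain ⟨j, rfl⟩ : ∃ j, n = 2 * k + j := ⟨n - 2 * k, by omega⟩
    have hne : (M * s ^ 2) ^ k ≠ 0 := by positivity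
    rw [Nat.add_sub_cancel_left, pow_add, inv_pow, pow_mul]
    field_simp
    ring
  have hgeom : ∑ k ∈ Finset.range (n / 2 + 1), r ^ k ≤ 4 := by
    rw [Finset.range_eq_Ico]
    refine (geom_sum_Ico_le_of_lt_one hr0 (by linarith)).trans ?_
    rw [pow_zero, div_le_iff₀ (by linarith)]
    linarith
  rw [Finset.sum_congr rfl hterm, ← Finset.mul_sum, mul_comm 4]
  exact mul_le_mul_of_nonneg_left hgeom (by positivity)

section Counting

variable {X : Type} [DecidableEq X]

theorem ballF_finite [Finite X] (n : ℕ) : (ballF X n).Finite :=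
  ((List.finite_length_le _ n).preimage toWord_injective.injOn).subset fun _ hw => hw

variable [Fintype X]

theorem ncard_ballF_le (hX : 2 ≤ Fintype.card X) (n : ℕ) :
    (ballF X n).ncard ≤ 3 * (2 * Fintype.card X - 1) ^ n := by
  have : Nonempty X := Fintype.card_pos_iff.1 (by omega)
  have hsub : ballF X n ⊆ ⋃ k ∈ Finset.range (n + 1), sphere k := fun w hw =>
    Set.mem_biUnion (Finset.mem_range.2 (Nat.lt_succ_of_le hw)) rfl
  calc (ballF X n).ncard ≤ (⋃ k ∈ Finset.range (n + 1), sphere (α := X) k).ncard :=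
        Set.ncard_le_ncard hsub
          (Set.Finite.biUnion (Finset.finite_toSet _) fun k _ => sphere_finite k)
    _ ≤ ∑ k ∈ Finset.range (n + 1), (sphere (α := X) k).ncard :=
        Finset.set_ncard_biUnion_le _ _
    _ ≤ ∑ k ∈ Finset.range (n + 1), 2 * (2 * Fintype.card X - 1) ^ k :=
        Finset.sum_le_sum fun k _ => ncard_sphere_le k
    _ ≤ 3 * (2 * Fintype.card X - 1) ^ n := sum_range_two_mul_pow_le (by omega) n

theorem pow_le_ncard_ballF [Nonempty X] (n : ℕ) :
    (2 * Fintype.card X - 1) ^ n ≤ (ballF X n).ncard :=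
  (pow_le_ncard_sphere n).trans
    (Set.ncard_le_ncard (fun _ hw => le_of_eq hw) (ballF_finite n))

theorem ncard_compl_cyclicPreimage_inter_ballF_le (S : Set (FreeGroup X)) (n : ℕ) :
    ((Set.univ \ cyclicPreimage S) ∩ ballF X n).ncard ≤
      ∑ k ∈ Finset.range (n / 2 + 1), (sphere (α := X) k).ncard *
        (({w : FreeGroup X | CyclicallyReduced w} \ S) ∩ ballF X (n - 2 * k)).ncard := by
  set φ : FreeGroup X → FreeGroup X × FreeGroup X :=
    fun w => (cyclicConjugator w, cyclicReduction w)
  set U := ⋃ k ∈ Finset.range (n / 2 + 1),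
    sphere (α := X) k ×ˢ (({w : FreeGroup X | CyclicallyReduced w} \ S) ∩ ballF X (n - 2 * k))
  have hφ : Function.Injective φ := fun w w' h => by
    obtain ⟨hg, hu⟩ := Prod.ext_iff.1 h
    rw [← cyclicConjugator_mul_cyclicReduction_mul_inv w,
      ← cyclicConjugator_mul_cyclicReduction_mul_inv w']
    exact congrArg₂ (fun g u => g * u * g⁻¹) hg hu
  have hmaps : φ '' ((Set.univ \ cyclicPreimage S) ∩ ballF X n) ⊆ U := by
    rintro _ ⟨w, ⟨⟨-, hw⟩, hwn⟩, rfl⟩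
    have hnorm := norm_eq_two_mul_norm_cyclicConjugator_add w
    have hwn' : norm w ≤ n := hwn
    refine Set.mem_biUnion (x := norm (cyclicConjugator w)) (Finset.mem_range.2 (by omega))
      ⟨rfl, ⟨cyclicallyReduced_cyclicReduction w, ?_⟩, ?_⟩
    · exact fun hS => hw (mem_cyclicPreimage_of_cyclicReduction_mem hS)
    · show norm (cyclicReduction w) ≤ n - 2 * norm (cyclicConjugator w)
      omega
  have hU : U.Finite := Set.Finite.biUnion (Finset.finite_toSet _) fun k _ =>
    (sphere_finite k).prod ((ballF_finite _).subset Set.inter_subset_right)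
  calc ((Set.univ \ cyclicPreimage S) ∩ ballF X n).ncard
      = (φ '' ((Set.univ \ cyclicPreimage S) ∩ ballF X n)).ncard := (hφ.injOn.ncard_image).symm
    _ ≤ U.ncard := Set.ncard_le_ncard hmaps hU
    _ ≤ _ := (Finset.set_ncard_biUnion_le _ _).trans_eq (by simp_rw [Set.ncard_prod])

theorem ncard_diff_inter_ballF_le (hX : 2 ≤ Fintype.card X)
    {S T : Set (FreeGroup X)} {C₀ s₀ s : ℝ}
    (hbound : ∀ n : ℕ,
      (((T \ S) ∩ ballF X n).ncard : ℝ) ≤ C₀ * s₀ ^ n * ((T ∩ ballF X n).ncard : ℝ))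
    (hC₀ : 0 ≤ C₀) (hs₀ : 0 ≤ s₀) (hs : s₀ ≤ s) (n : ℕ) :
    (((T \ S) ∩ ballF X n).ncard : ℝ) ≤
      3 * C₀ * (((2 * Fintype.card X - 1 : ℕ) : ℝ) * s) ^ n := by
  have : 0 ≤ s := hs₀.trans hs
  calc (((T \ S) ∩ ballF X n).ncard : ℝ)
      ≤ C₀ * s₀ ^ n * ((T ∩ ballF X n).ncard : ℝ) := hbound n
    _ ≤ C₀ * s ^ n * ((3 * (2 * Fintype.card X - 1) ^ n : ℕ) : ℝ) := by
        gcongr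
        exact (Set.ncard_le_ncard Set.inter_subset_right (ballF_finite n)).trans
          (ncard_ballF_le hX n)
    _ = 3 * C₀ * (((2 * Fintype.card X - 1 : ℕ) : ℝ) * s) ^ n := by push_cast; ring

end Counting

theorem statement17_general (X : Type) [Fintype X] [DecidableEq X] (hX : 2 ≤ Fintype.card X)
    (S : Set (FreeGroup X))
    (hgen : ExpGeneric S {w : FreeGroup X | CyclicallyReduced w}) :
    ExpGeneric (cyclicPreimage S) (Set.univ : Set (FreeGroup X)) := by
  obtain ⟨C₀, hC₀, s₀, hs₀, hs₀1, hbound⟩ := hgen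
  have : Nonempty X := Fintype.card_pos_iff.1 (by omega)
  set M : ℕ := 2 * Fintype.card X - 1
  have hM : (3 : ℝ) ≤ M := by exact_mod_cast (show 3 ≤ M by omega)
  set s := max s₀ (2 / 3)
  refine ⟨24 * C₀, by positivity, s, by positivity, max_lt hs₀1 (by norm_num), fun n => ?_⟩
  rw [Set.univ_inter]
  calc (((Set.univ \ cyclicPreimage S) ∩ ballF X n).ncard : ℝ)
      ≤ ∑ k ∈ Finset.range (n / 2 + 1), ((sphere (α := X) k).ncard : ℝ) *
          ((({w : FreeGroup X | CyclicallyReduced w} \ S) ∩ ballF X (n - 2 * k)).ncard : ℝ) :=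
        by exact_mod_cast ncard_compl_cyclicPreimage_inter_ballF_le S n
    _ ≤ ∑ k ∈ Finset.range (n / 2 + 1),
          2 * (M : ℝ) ^ k * (3 * C₀ * (M * s) ^ (n - 2 * k)) := by
        gcongr with k
        · exact_mod_cast ncard_sphere_le k
        · exact ncard_diff_inter_ballF_le hX hbound hC₀.le hs₀.le (le_max_left _ _) _
    _ = 6 * C₀ * ∑ k ∈ Finset.range (n / 2 + 1), (M : ℝ) ^ k * (M * s) ^ (n - 2 * k) := by
        rw [Finset.mul_sum]
        exact Finset.sum_congr rfl fun k _ => by ring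
    _ ≤ 6 * C₀ * (4 * (M * s) ^ n) := by
        gcongr
        exact sum_pow_mul_pow_sub_two_mul_le hM (le_max_right _ _) n
    _ = 24 * C₀ * s ^ n * ((M ^ n : ℕ) : ℝ) := by push_cast; ring
    _ ≤ 24 * C₀ * s ^ n * ((ballF X n).ncard : ℝ) := by
        gcongr
        exact pow_le_ncard_ballF n

/-- if S ⊆ C is exponentially C-generic (C the cyclically reduced
elements), then S' = {w : the cyclic reduction of w lies in S} is exponentially
F(X)-generic. -/
theorem statement17 (X : Type) [Fintype X] [DecidableEq X] (hX : 2 ≤ Fintype.card X)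
    (S : Set (FreeGroup X)) (hS : S ⊆ {w : FreeGroup X | CyclicallyReduced w})
    (hgen : ExpGeneric S {w : FreeGroup X | CyclicallyReduced w}) :
    ExpGeneric (cyclicPreimage S) (Set.univ : Set (FreeGroup X)) :=
  statement17_general X hX S hgen
end
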